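/- arXiv:2112.07933 — 5 statements merged into one kernel-verified Lean document; each statement's English description precedes it below -/
import Mathlib

section
/- Let φ be the (m+1)-dimensional irreducible representation of sl(2,ℂ). Then for all complex z₀, z₁: det(z₀·I + z₁·φ(h) + φ(e₁) + φ(e₂)) = ∏_{i=0}^{m} (z₀ + (m - 2i)·√(1 + z₁²)), where √(1+z₁²) is a fixed square root. -/
open Matrix

/-- `φ(h)` for the irreducible representation of highest weight `m`. -/
def phiH (m : ℕ) : Matrix (Fin (m + 1)) (Fin (m + 1)) ℂ :=
  Matrix.diagonal fun i => (m : ℂ) - 2 * (i : ℕ)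

/-- `φ(e₁)`: `φ(e₁) v_i = (m - i + 1) v_{i-1}`. -/
def phiE (m : ℕ) : Matrix (Fin (m + 1)) (Fin (m + 1)) ℂ :=
  Matrix.of fun i j => if (i : ℕ) + 1 = (j : ℕ) then (m : ℂ) - (j : ℕ) + 1 else 0

/-- `φ(e₂)`: `φ(e₂) v_i = (i + 1) v_{i+1}`. -/
def phiF (m : ℕ) : Matrix (Fin (m + 1)) (Fin (m + 1)) ℂ :=
  Matrix.of fun i j => if (j : ℕ) + 1 = (i : ℕ) then ((j : ℕ) + 1 : ℂ) else 0

/-!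
Write `H, E, F` for `φ(h), φ(e₁), φ(e₂)` and put `c = s - z₁`, so that `c² + 2 z₁ c = 1`.
Since `F` is nilpotent, `P = exp (c F)` is a polynomial in `F`, and the relations `[H, F] = -2F`,
`[E, F] = H` give `P⁻¹ H P = H - 2c F` and `P⁻¹ E P = E + c H - c² F`. Hence
`P⁻¹ (z₁ H + E + F) P = s H + E + (1 - 2 z₁ c - c²) F = s H + E`, and `z₀ + s H + E` is upper
triangular with diagonal entries `z₀ + (m - 2i) s`.
-/

open Finset
open scoped Nat

section Sl2Relations

variable {K A : Type*} [Field K] [Ring A] [Algebra K A] {h e f : A}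

theorem mul_pow_eq_of_lie_eq_neg_two_nsmul (hhf : ⁅h, f⁆ = -(2 • f)) (n : ℕ) :
    h * f ^ n = f ^ n * h - (2 * n) • f ^ n := by
  rw [Ring.lie_def] at hhf
  induction n with
  | zero => simp
  | succ n ih =>
    rw [pow_succ, ← mul_assoc, ih, sub_mul, mul_assoc, eq_add_of_sub_eq hhf]
    simp only [mul_add, mul_neg, mul_smul_comm, smul_mul_assoc, ← mul_assoc, ← pow_succ]
    module

theorem mul_pow_succ_eq_of_lie_eq (hhf : ⁅h, f⁆ = -(2 • f)) (hef : ⁅e, f⁆ = h) (n : ℕ) :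
    e * f ^ (n + 1) = f ^ (n + 1) * e + (n + 1) • (f ^ n * h) - (n * (n + 1)) • f ^ n := by
  rw [Ring.lie_def] at hef hhf
  induction n with
  | zero => simp [eq_add_of_sub_eq' hef]
  | succ n ih =>
    rw [pow_succ _ (n + 1), ← mul_assoc, ih]
    simp only [sub_mul, add_mul, mul_assoc, smul_mul_assoc, eq_add_of_sub_eq hhf,
      eq_add_of_sub_eq' hef]
    simp only [mul_add, mul_neg, mul_smul_comm, ← mul_assoc, ← pow_succ]
    module

/-- Summing up to degree `N` rather than `N - 1` keeps the index shifts below inside the range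
when `f ^ N = 0`. -/
def truncExp (N : ℕ) (c : K) (f : A) : A :=
  ∑ j ∈ range (N + 1), (c ^ j / j !) • f ^ j

variable {N : ℕ} {c : K}

theorem isUnit_truncExp (hf : IsNilpotent f) : IsUnit (truncExp N c f) := by
  rw [truncExp, sum_range_succ']
  simp only [pow_zero, Nat.factorial_zero, Nat.cast_one, div_one, one_smul]
  refine IsNilpotent.isUnit_add_one (Commute.isNilpotent_sum (fun j _ => ?_) fun i j _ _ => ?_)
  · exact (hf.pow_succ j).smul _
  · exact ((Commute.pow_pow_self f _ _).smul_left _).smul_right _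

variable [CharZero K]

theorem succ_mul_pow_succ_div_factorial (c : K) (j : ℕ) :
    (j + 1 : K) * (c ^ (j + 1) / (j + 1)!) = c * (c ^ j / j !) := by
  rw [Nat.factorial_succ, Nat.cast_mul, pow_succ]
  field_simp
  push_cast
  ring

theorem sum_range_succ_mul_pow_succ_div_factorial_smul {M : Type*} [AddCommGroup M]
    [Module K M] (c : K) (X : ℕ → M) (hX : X N = 0) :
    ∑ j ∈ range N, ((j + 1 : K) * (c ^ (j + 1) / (j + 1)!)) • X j
      = c • ∑ j ∈ range (N + 1), (c ^ j / j !) • X j := by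
  rw [sum_range_succ, hX, smul_zero, add_zero, smul_sum]
  refine sum_congr rfl fun j _ => ?_
  rw [succ_mul_pow_succ_div_factorial, mul_smul]

theorem sum_nsmul_eq_smul_mul_truncExp (hf : f ^ N = 0) :
    ∑ j ∈ range (N + 1), (c ^ j / j !) • (j • f ^ j) = c • (f * truncExp N c f) := by
  rw [sum_range_succ', truncExp, mul_sum]
  simp only [pow_zero, Nat.factorial_zero, zero_smul, smul_zero, add_zero, ← pow_succ',
    mul_smul_comm]
  rw [← sum_range_succ_mul_pow_succ_div_factorial_smul c _ (by simp [pow_succ', hf])]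
  refine sum_congr rfl fun j _ => ?_
  rw [← Nat.cast_smul_eq_nsmul K, smul_smul]
  push_cast
  rw [mul_comm]

theorem mul_truncExp_eq_of_lie_eq_neg_two_nsmul (hhf : ⁅h, f⁆ = -(2 • f)) (hf : f ^ N = 0) :
    h * truncExp N c f = truncExp N c f * h - (2 * c) • (f * truncExp N c f) := by
  rw [mul_smul, ← sum_nsmul_eq_smul_mul_truncExp hf]
  simp only [truncExp, mul_sum, sum_mul, mul_smul_comm, smul_mul_assoc,
    mul_pow_eq_of_lie_eq_neg_two_nsmul hhf, smul_sub, sum_sub_distrib, smul_sum]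
  congr 1
  exact sum_congr rfl fun j _ => by module

theorem mul_truncExp_eq_of_lie_eq (hhf : ⁅h, f⁆ = -(2 • f)) (hef : ⁅e, f⁆ = h)
    (hf : f ^ N = 0) :
    e * truncExp N c f
      = truncExp N c f * e + c • (truncExp N c f * h) - c ^ 2 • (f * truncExp N c f) := by
  have hPh : c • (truncExp N c f * h)
      = ∑ j ∈ range N, ((j + 1 : K) * (c ^ (j + 1) / (j + 1)!)) • (f ^ j * h) := by
    rw [sum_range_succ_mul_pow_succ_div_factorial_smul c (fun j => f ^ j * h) (by simp [hf]),
      truncExp, sum_mul]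
    simp only [smul_mul_assoc]
  have hfP : c ^ 2 • (f * truncExp N c f)
      = ∑ j ∈ range N, ((j + 1 : K) * (c ^ (j + 1) / (j + 1)!)) • (j • f ^ j) := by
    rw [sq, mul_smul, ← sum_nsmul_eq_smul_mul_truncExp hf,
      sum_range_succ_mul_pow_succ_div_factorial_smul c (fun j => j • f ^ j) (by simp [hf])]
  rw [hPh, hfP, truncExp, mul_sum, sum_mul, sum_range_succ', sum_range_succ' _ N]
  simp only [mul_smul_comm, mul_pow_succ_eq_of_lie_eq hhf hef, smul_mul_assoc, pow_zero, mul_one,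
    one_mul, Nat.factorial_zero, Nat.cast_one, div_one, one_smul]
  rw [add_right_comm _ e, add_sub_right_comm, ← sum_add_distrib, ← sum_sub_distrib]
  congr 1
  exact sum_congr rfl fun j _ => by module

theorem mul_truncExp_eq_truncExp_mul (hhf : ⁅h, f⁆ = -(2 • f)) (hef : ⁅e, f⁆ = h)
    (hf : f ^ N = 0) {z : K} (hc : c ^ 2 + 2 * z * c = 1) (z₀ : K) :
    (z₀ • 1 + z • h + e + f) * truncExp N c f = truncExp N c f * (z₀ • 1 + (z + c) • h + e) := by
  rw [add_mul, add_mul, add_mul, smul_mul_assoc, smul_mul_assoc, one_mul,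
    mul_truncExp_eq_of_lie_eq_neg_two_nsmul hhf hf, mul_truncExp_eq_of_lie_eq hhf hef hf,
    mul_add, mul_add, mul_smul_comm, mul_smul_comm, mul_one]
  linear_combination (norm := module) -hc • (f * truncExp N c f)

end Sl2Relations

theorem Matrix.pow_card_eq_zero_of_isLowerTriangular {n R : Type*} [CommRing R] [Fintype n]
    [LinearOrder n] {M : Matrix n n R} (hM : M.IsLowerTriangular) (hdiag : ∀ i, M i i = 0) :
    M ^ Fintype.card n = 0 := by
  have hchar := charpoly_of_isUpperTriangular Mᵀ hM.transpose
  have hCH := aeval_self_charpoly Mᵀ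
  rw [hchar] at hCH
  simpa [hdiag, ← transpose_pow] using hCH

theorem lie_phiH_phiF (m : ℕ) : ⁅phiH m, phiF m⁆ = -(2 • phiF m) := by
  ext i j
  simp only [Ring.lie_def, phiH, phiF, Matrix.sub_apply, diagonal_mul, mul_diagonal, of_apply,
    Matrix.neg_apply, Matrix.smul_apply]
  split_ifs with hij
  · rw [← hij]
    push_cast
    ring
  · simp

theorem lie_phiE_phiF (m : ℕ) : ⁅phiE m, phiF m⁆ = phiH m := by
  ext ⟨i, hi⟩ ⟨j, hj⟩
  simp only [Ring.lie_def, phiH, phiE, phiF, Matrix.sub_apply, mul_apply, of_apply,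
    diagonal_apply, Fin.mk.injEq]
  rw [Fin.sum_univ_eq_sum_range (fun k => (if i + 1 = k then (m : ℂ) - k + 1 else 0) *
      if j + 1 = k then (j : ℂ) + 1 else 0),
    Fin.sum_univ_eq_sum_range (fun k => (if k + 1 = i then (k : ℂ) + 1 else 0) *
      if k + 1 = j then (m : ℂ) - j + 1 else 0)]
  by_cases hij : i = j
  · subst hij
    simp only [mul_ite, ite_mul, mul_zero, zero_mul, ← ite_and, and_self, if_true]
    rcases i with _ | i
    · simp +contextual
    · simp only [Nat.cast_add, Nat.cast_one, sum_ite_eq, sum_ite_eq', mem_range,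
        Nat.add_right_cancel_iff]
      split_ifs <;> try omega
      · ring
      · obtain rfl : m = i + 1 := by omega
        push_cast
        ring
  · rw [sum_eq_zero, sum_eq_zero]
    · simp [hij]
    all_goals intro k _; split_ifs <;> first | omega | simp

theorem phiF_pow (m : ℕ) : phiF m ^ (m + 1) = 0 := by
  simpa using pow_card_eq_zero_of_isLowerTriangular (M := phiF m)
    (fun i j hij => if_neg (by rw [OrderDual.toDual_lt_toDual] at hij; omega))
    (fun i => if_neg (by omega))

theorem det_smul_one_add_smul_phiH_add_phiE (m : ℕ) (z₀ s : ℂ) :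
    (z₀ • (1 : Matrix (Fin (m + 1)) (Fin (m + 1)) ℂ) + s • phiH m + phiE m).det
      = ∏ i : Fin (m + 1), (z₀ + ((m : ℂ) - 2 * (i : ℕ)) * s) := by
  rw [det_of_isUpperTriangular]
  · refine prod_congr rfl fun i _ => ?_
    simp only [phiH, phiE, Matrix.add_apply, Matrix.smul_apply, one_apply_eq, smul_eq_mul,
      mul_one, diagonal_apply_eq, of_apply, Nat.add_eq_left, one_ne_zero, ↓reduceIte, add_zero]
    ring
  · intro i j (hij : j < i)
    simp only [phiH, phiE, Matrix.add_apply, Matrix.smul_apply, one_apply_ne hij.ne',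
      diagonal_apply_ne _ hij.ne', smul_eq_mul, mul_zero, add_zero, of_apply, zero_add,
      ite_eq_right_iff]
    omega

theorem hu_zhang_conjecture (m : ℕ) (z₀ z₁ s : ℂ) (hs : s ^ 2 = 1 + z₁ ^ 2) :
    (z₀ • (1 : Matrix (Fin (m + 1)) (Fin (m + 1)) ℂ) + z₁ • phiH m + phiE m + phiF m).det
      = ∏ i ∈ Finset.range (m + 1), (z₀ + ((m : ℂ) - 2 * i) * s) := by
  have hc : (s - z₁) ^ 2 + 2 * z₁ * (s - z₁) = 1 := by linear_combination hs
  have hconj := mul_truncExp_eq_truncExp_mul (lie_phiH_phiF m) (lie_phiE_phiF m) (phiF_pow m) hc z₀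
  rw [add_sub_cancel] at hconj
  have hP : (truncExp (m + 1) (s - z₁) (phiF m)).det ≠ 0 :=
    ((isUnit_iff_isUnit_det _).mp (isUnit_truncExp ⟨_, phiF_pow m⟩)).ne_zero
  have hdet := congrArg det hconj
  rw [det_mul, det_mul, mul_comm _ (det _)] at hdet
  rw [mul_left_cancel₀ hP hdet, det_smul_one_add_smul_phiH_add_phiE,
    Fin.prod_univ_eq_prod_range (fun i => z₀ + ((m : ℂ) - 2 * i) * s)]
end

section
/- For the (m+1)-dimensional irreducible representation φ of sl(2,ℂ), if m is even then det(z₀I + z₁φ(h) + φ(e₁) + φ(e₂)) = z₀·∏_{l=1}^{m/2}(z₀² - 4l²(1 + z₁²)), and if m is odd it equals ∏_{l=0}^{(m-1)/2}(z₀² - (2l+1)²(1 + z₁²)). -/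
open Matrix

/-- entries of `exp (t φ(f))`. -/
noncomputable def nuf (t : ℂ) (a b : ℕ) : ℂ := (a.choose b : ℂ) * t ^ (a - b)

lemma key (z₁ w t : ℂ) (hw : w = z₁ + t) (ht2 : t ^ 2 = 1 - 2 * z₁ * t) (m i j : ℕ) :
    z₁ * ((m : ℂ) - 2 * i) * nuf t i j + ((m : ℂ) - i) * nuf t (i + 1) j
      + (i : ℂ) * nuf t (i - 1) j
    = w * ((m : ℂ) - 2 * j) * nuf t i j
      + (if j = 0 then 0 else ((m : ℂ) - j + 1) * nuf t i (j - 1)) := by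
  subst hw
  rcases j with _ | j'
  · simp only [if_pos rfl, Nat.cast_zero, add_zero]
    rcases i with _ | i'
    · simp [nuf]
      ring
    · simp only [nuf, Nat.choose_zero_right, Nat.cast_one, one_mul, Nat.sub_zero,
        Nat.add_sub_cancel]
      push_cast
      linear_combination (-((i' : ℂ) + 1)) * t ^ i' * ht2
  · rcases Nat.lt_trichotomy i (j' + 1) with hij | hij | hij
    · rcases Nat.lt_or_ge i j' with h2 | h2
      · simp only [nuf, Nat.add_sub_cancel,
          Nat.choose_eq_zero_of_lt (by omega : i < j' + 1),
          Nat.choose_eq_zero_of_lt (by omega : i + 1 < j' + 1),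
          Nat.choose_eq_zero_of_lt (by omega : i - 1 < j' + 1),
          Nat.choose_eq_zero_of_lt (by omega : i < j'), if_neg (Nat.succ_ne_zero j')]
        push_cast
        ring
      · have h3 : i = j' := by omega
        subst h3
        simp only [nuf, Nat.add_sub_cancel,
          Nat.choose_eq_zero_of_lt (by omega : i < i + 1),
          Nat.choose_eq_zero_of_lt (by omega : i - 1 < i + 1),
          Nat.choose_self, Nat.sub_self, if_neg (Nat.succ_ne_zero i)]
        push_cast
        ring
    · subst hij
      simp only [nuf, Nat.add_sub_cancel, Nat.choose_self, Nat.sub_self,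
        Nat.choose_succ_self, Nat.choose_succ_self_right, if_neg (Nat.succ_ne_zero j')]
      rw [show j' + 1 + 1 - (j' + 1) = 1 from by omega,
        show j' + 1 - j' = 1 from by omega]
      push_cast
      ring
    · obtain ⟨d, hd⟩ : ∃ d, i = j' + 2 + d := ⟨i - j' - 2, by omega⟩
      subst hd
      rw [nuf, nuf, nuf, nuf, if_neg (Nat.succ_ne_zero j')]
      rw [show j' + 2 + d - (j' + 1) = d + 1 from by omega,
        show j' + 2 + d + 1 - (j' + 1) = d + 2 from by omega,
        show j' + 2 + d - 1 = j' + 1 + d from by omega,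
        show j' + 1 + d - (j' + 1) = d from by omega,
        show j' + 1 - 1 = j' from by omega,
        show j' + 2 + d - j' = d + 2 from by omega]
      have hP : (((j' + 2 + d + 1).choose (j' + 1) : ℕ) : ℂ)
          = ((j' + 2 + d).choose (j' + 1) : ℕ) + ((j' + 2 + d).choose j' : ℕ) := by
        rw [Nat.choose_succ_succ' (j' + 2 + d) j']
        push_cast; ring
      have hJ : (((j' + 2 + d).choose (j' + 1) : ℕ) : ℂ) * ((j' : ℂ) + 1)
          = (((j' + 2 + d).choose j' : ℕ) : ℂ) * ((d : ℂ) + 2) := by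
        have := Nat.choose_succ_right_eq (j' + 2 + d) j'
        rw [show j' + 2 + d - j' = d + 2 from by omega] at this
        exact_mod_cast congrArg (Nat.cast : ℕ → ℂ) this
      have hI : (((j' + 1 + d).choose (j' + 1) : ℕ) : ℂ) * ((j' : ℂ) + 2 + d)
          = (((j' + 2 + d).choose (j' + 1) : ℕ) : ℂ) * ((d : ℂ) + 1) := by
        have := Nat.choose_mul_succ_eq (j' + 1 + d) (j' + 1)
        rw [show j' + 1 + d + 1 = j' + 2 + d from by omega,
          show j' + 2 + d - (j' + 1) = d + 1 from by omega] at this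
        exact_mod_cast congrArg (Nat.cast : ℕ → ℂ) this
      push_cast
      push_cast at hP hJ hI
      linear_combination (((m : ℂ) - ((j' : ℂ) + 2 + d)) * t ^ (d + 2)) * hP
        + t ^ d * hI + t ^ (d + 2) * hJ
        - (((j' + 2 + d).choose (j' + 1) : ℕ) : ℂ) * ((d : ℂ) + 1) * t ^ d * ht2

lemma det_aux (m : ℕ) (z₀ z₁ w : ℂ) (hw2 : w ^ 2 = 1 + z₁ ^ 2) :
    (z₀ • (1 : Matrix (Fin (m + 1)) (Fin (m + 1)) ℂ) + z₁ • phiH m + phiE m + phiF m).det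
      = ∏ i ∈ Finset.range (m + 1), (z₀ + w * ((m : ℂ) - 2 * i)) := by
  set t : ℂ := w - z₁ with htdef
  have hw : w = z₁ + t := by rw [htdef]; ring
  have ht2 : t ^ 2 = 1 - 2 * z₁ * t := by rw [htdef]; linear_combination hw2
  set N : Matrix (Fin (m + 1)) (Fin (m + 1)) ℂ :=
    Matrix.of (fun i j => nuf t (i : ℕ) (j : ℕ)) with hNdef
  have hEN : ∀ i j : Fin (m + 1),
      (phiE m * N) i j = ((m : ℂ) - (i : ℕ)) * nuf t ((i : ℕ) + 1) (j : ℕ) := by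
    intro i j
    rw [Matrix.mul_apply]
    by_cases hi : (i : ℕ) < m
    · rw [Finset.sum_eq_single (⟨(i : ℕ) + 1, by omega⟩ : Fin (m + 1))]
      · show (if (i : ℕ) + 1 = (i : ℕ) + 1 then (m : ℂ) - ((i : ℕ) + 1 : ℕ) + 1 else 0)
            * nuf t ((i : ℕ) + 1) (j : ℕ) = _
        rw [if_pos rfl]
        push_cast
        ring
      · intro k _ hk
        have hne : ¬((i : ℕ) + 1 = (k : ℕ)) := by
          intro h
          exact hk (by apply Fin.ext; simp [← h])
        simp [phiE, hne]
      · intro h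
        exact absurd (Finset.mem_univ _) h
    · have him : (i : ℕ) = m := by omega
      rw [Finset.sum_eq_zero, him]
      · simp
      · intro k _
        have hne : ¬((i : ℕ) + 1 = (k : ℕ)) := by have := k.isLt; omega
        simp [phiE, hne]
  have hFN : ∀ i j : Fin (m + 1),
      (phiF m * N) i j = ((i : ℕ) : ℂ) * nuf t ((i : ℕ) - 1) (j : ℕ) := by
    intro i j
    rw [Matrix.mul_apply]
    by_cases hi : (i : ℕ) = 0
    · rw [Finset.sum_eq_zero, hi]
      · simp
      · intro k _
        have hne : ¬((k : ℕ) + 1 = (i : ℕ)) := by omega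
        simp [phiF, hne]
    · rw [Finset.sum_eq_single (⟨(i : ℕ) - 1, by omega⟩ : Fin (m + 1))]
      · show (if ((i : ℕ) - 1) + 1 = (i : ℕ) then (((i : ℕ) - 1 : ℕ) + 1 : ℂ) else 0)
            * nuf t ((i : ℕ) - 1) (j : ℕ) = _
        rw [if_pos (by omega)]
        have : (((i : ℕ) - 1 : ℕ) : ℂ) + 1 = ((i : ℕ) : ℂ) := by
          have : ((i : ℕ) - 1 : ℕ) + 1 = (i : ℕ) := by omega
          exact_mod_cast congrArg (Nat.cast : ℕ → ℂ) this
        rw [this]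
      · intro k _ hk
        have hne : ¬((k : ℕ) + 1 = (i : ℕ)) := by
          intro h
          exact hk (by apply Fin.ext; simp; omega)
        simp [phiF, hne]
      · intro h
        exact absurd (Finset.mem_univ _) h
  have hNE : ∀ i j : Fin (m + 1),
      (N * phiE m) i j
        = (if (j : ℕ) = 0 then 0
            else ((m : ℂ) - (j : ℕ) + 1) * nuf t (i : ℕ) ((j : ℕ) - 1)) := by
    intro i j
    rw [Matrix.mul_apply]
    by_cases hj : (j : ℕ) = 0
    · rw [Finset.sum_eq_zero, if_pos hj]
      intro k _
      have hne : ¬((k : ℕ) + 1 = (j : ℕ)) := by omega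
      simp [phiE, hne]
    · rw [if_neg hj, Finset.sum_eq_single (⟨(j : ℕ) - 1, by omega⟩ : Fin (m + 1))]
      · show nuf t (i : ℕ) ((j : ℕ) - 1)
            * (if ((j : ℕ) - 1) + 1 = (j : ℕ) then (m : ℂ) - (j : ℕ) + 1 else 0) = _
        rw [if_pos (by omega)]
        ring
      · intro k _ hk
        have hne : ¬((k : ℕ) + 1 = (j : ℕ)) := by
          intro h
          exact hk (by apply Fin.ext; simp; omega)
        simp [phiE, hne]
      · intro h
        exact absurd (Finset.mem_univ _) h
  have hMN : (z₀ • 1 + z₁ • phiH m + phiE m + phiF m) * N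
      = N * (z₀ • 1 + w • phiH m + phiE m) := by
    ext i j
    simp only [Matrix.add_mul, Matrix.mul_add, Matrix.smul_mul, Matrix.mul_smul,
      Matrix.one_mul, Matrix.mul_one, Matrix.add_apply, Matrix.smul_apply, smul_eq_mul]
    rw [hEN i j, hFN i j, hNE i j]
    have hHN : (phiH m * N) i j = ((m : ℂ) - 2 * (i : ℕ)) * N i j := by
      simp only [phiH, Matrix.diagonal_mul]
    have hNH : (N * phiH m) i j = ((m : ℂ) - 2 * (j : ℕ)) * N i j := by
      simp only [phiH, Matrix.mul_diagonal]
      ring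
    rw [hHN, hNH]
    have hNij : N i j = nuf t (i : ℕ) (j : ℕ) := rfl
    rw [hNij]
    linear_combination key z₁ w t hw ht2 m (i : ℕ) (j : ℕ)
  have hNdet : N.det = 1 := by
    rw [Matrix.det_of_lowerTriangular N]
    · rw [Finset.prod_eq_one]
      intro i _
      show nuf t (i : ℕ) (i : ℕ) = 1
      simp [nuf]
    · intro i j hij
      have : (i : ℕ) < (j : ℕ) := hij
      show nuf t (i : ℕ) (j : ℕ) = 0
      simp [nuf, Nat.choose_eq_zero_of_lt this]
  have hTdet : (z₀ • (1 : Matrix (Fin (m + 1)) (Fin (m + 1)) ℂ) + w • phiH m + phiE m).det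
      = ∏ i : Fin (m + 1), (z₀ + w * ((m : ℂ) - 2 * (i : ℕ))) := by
    rw [Matrix.det_of_upperTriangular]
    · apply Finset.prod_congr rfl
      intro i _
      show z₀ * (1 : Matrix (Fin (m + 1)) (Fin (m + 1)) ℂ) i i
          + w * phiH m i i + phiE m i i = _
      rw [Matrix.one_apply_eq]
      simp [phiH, phiE]
    · intro i j hij
      have h1 : (j : ℕ) < (i : ℕ) := hij
      have hne : i ≠ j := by
        intro h
        subst h
        exact lt_irrefl _ h1
      have h2 : ¬((i : ℕ) + 1 = (j : ℕ)) := by omega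
      show z₀ * (1 : Matrix (Fin (m + 1)) (Fin (m + 1)) ℂ) i j
          + w * phiH m i j + phiE m i j = 0
      simp [phiH, phiE, Matrix.one_apply_ne hne, Matrix.diagonal_apply_ne _ hne, h2]
  have hdet : (z₀ • 1 + z₁ • phiH m + phiE m + phiF m).det * N.det
      = N.det * (z₀ • (1 : Matrix (Fin (m + 1)) (Fin (m + 1)) ℂ) + w • phiH m + phiE m).det := by
    rw [← Matrix.det_mul, ← Matrix.det_mul, hMN]
  rw [hNdet, mul_one, one_mul] at hdet
  rw [hdet, hTdet, ← Fin.prod_univ_eq_prod_range (fun i => z₀ + w * ((m : ℂ) - 2 * i)) (m + 1)]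

lemma prod_even (z₀ w u : ℂ) (hu : w ^ 2 = u) : ∀ k : ℕ,
    ∏ i ∈ Finset.range (2 * k + 1), (z₀ + w * (((2 * k : ℕ) : ℂ) - 2 * i))
      = z₀ * ∏ l ∈ Finset.range k, (z₀ ^ 2 - 4 * ((l : ℂ) + 1) ^ 2 * u)
  | 0 => by simp
  | (k + 1) => by
    have IH := prod_even z₀ w u hu k
    rw [Finset.prod_range_succ']
    rw [show 2 * (k + 1) = (2 * k + 1) + 1 from by ring]
    rw [Finset.prod_range_succ]
    have hcongr : ∀ i ∈ Finset.range (2 * k + 1),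
        (z₀ + w * ((((2 * k + 1) + 1 : ℕ) : ℂ) - 2 * ((i + 1 : ℕ) : ℂ)))
          = z₀ + w * (((2 * k : ℕ) : ℂ) - 2 * (i : ℂ)) := by
      intro i _
      push_cast
      ring
    rw [Finset.prod_congr rfl hcongr, IH, Finset.prod_range_succ]
    set P := ∏ l ∈ Finset.range k, (z₀ ^ 2 - 4 * ((l : ℂ) + 1) ^ 2 * u) with hP
    push_cast
    linear_combination (-4 * z₀ * P * ((k : ℂ) + 1) ^ 2) * hu

lemma prod_odd (z₀ w u : ℂ) (hu : w ^ 2 = u) : ∀ k : ℕ,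
    ∏ i ∈ Finset.range (2 * k + 1 + 1), (z₀ + w * (((2 * k + 1 : ℕ) : ℂ) - 2 * i))
      = ∏ l ∈ Finset.range (k + 1), (z₀ ^ 2 - (2 * (l : ℂ) + 1) ^ 2 * u)
  | 0 => by
    rw [Finset.prod_range_succ, Finset.prod_range_one, Finset.prod_range_one]
    push_cast
    linear_combination (-1 : ℂ) * hu
  | (k + 1) => by
    have IH := prod_odd z₀ w u hu k
    rw [Finset.prod_range_succ']
    rw [show 2 * (k + 1) + 1 = (2 * k + 1 + 1) + 1 from by ring]
    rw [Finset.prod_range_succ]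
    have hcongr : ∀ i ∈ Finset.range (2 * k + 1 + 1),
        (z₀ + w * ((((2 * k + 1 + 1) + 1 : ℕ) : ℂ) - 2 * ((i + 1 : ℕ) : ℂ)))
          = z₀ + w * (((2 * k + 1 : ℕ) : ℂ) - 2 * (i : ℂ)) := by
      intro i _
      push_cast
      ring
    rw [Finset.prod_congr rfl hcongr, IH]
    conv_rhs => rw [Finset.prod_range_succ]
    set P := ∏ l ∈ Finset.range (k + 1), (z₀ ^ 2 - (2 * (l : ℂ) + 1) ^ 2 * u) with hP
    push_cast
    linear_combination (-(2 * ((k : ℂ) + 1) + 1) ^ 2) * P * hu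

theorem char_poly_irreducible_two_vars (m : ℕ) (z₀ z₁ : ℂ) :
    (∀ k : ℕ, m = 2 * k →
      (z₀ • (1 : Matrix (Fin (m + 1)) (Fin (m + 1)) ℂ) + z₁ • phiH m + phiE m + phiF m).det
        = z₀ * ∏ l ∈ Finset.range k, (z₀ ^ 2 - 4 * ((l : ℂ) + 1) ^ 2 * (1 + z₁ ^ 2))) ∧
    (∀ k : ℕ, m = 2 * k + 1 →
      (z₀ • (1 : Matrix (Fin (m + 1)) (Fin (m + 1)) ℂ) + z₁ • phiH m + phiE m + phiF m).det
        = ∏ l ∈ Finset.range (k + 1), (z₀ ^ 2 - (2 * (l : ℂ) + 1) ^ 2 * (1 + z₁ ^ 2))) := by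
  obtain ⟨w, hw2⟩ := IsAlgClosed.exists_pow_nat_eq (1 + z₁ ^ 2) (n := 2) (by norm_num)
  constructor
  · intro k hk
    subst hk
    rw [det_aux (2 * k) z₀ z₁ w hw2]
    exact prod_even z₀ w (1 + z₁ ^ 2) hw2 k
  · intro k hk
    subst hk
    rw [det_aux (2 * k + 1) z₀ z₁ w hw2]
    exact prod_odd z₀ w (1 + z₁ ^ 2) hw2 k
end

section
/- The characteristic polynomial satisfies the symmetry f_φ(z₀, z₁, 1, 1) = f_φ(z₀, 1, z₁, z₁) for every finite-dimensional representation φ of sl(2,ℂ), where f_φ(z₀,z₁,z₂,z₃) = det(z₀I + z₁φ(h) + z₂φ(e₁) + z₃φ(e₂)). -/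
/-!
Write `X(x, y, z) = x • H + y • E + z • F`. Since `ad H` has the nonzero eigenvalues `±2` on `E`
and `F`, both are nilpotent, so `exp (s • E)` and `exp (s • F)` are invertible polynomials in them.
Because `(ad E)³` and `(ad F)³` kill every `X(x, y, z)`, conjugating by these exponentials maps
`z₀ + X(x, y, z)` to `z₀ + X(x', y', z')` with explicit quadratic coordinate changes, exactly as
for the adjoint action of `SL₂`, and leaves the determinant unchanged. Three such conjugations
compose to the element of `SL₂` that interchanges `h` and `e + f`, which carries
`z₁ h + e + f` to `h + z₁ (e + f)`.
-/

open LinearMap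

namespace IsNilpotent

variable {A : Type*} [Ring A] [Algebra ℚ A] {a : A}

theorem exp_mulRight (ha : IsNilpotent a) : exp (mulRight ℚ a) = mulRight ℚ (exp a) := by
  obtain ⟨k, hk⟩ := ha
  have hk' : mulRight ℚ a ^ k = 0 := by rw [pow_mulRight, hk, mulRight_zero_eq_zero]
  ext x
  simp [exp_eq_sum hk, exp_eq_sum hk', pow_mulRight, Finset.mul_sum]

theorem isNilpotent_mulLeft_sub_mulRight (ha : IsNilpotent a) :
    IsNilpotent (mulLeft ℚ a - mulRight ℚ a) :=
  (commute_mulLeft_right a a).isNilpotent_sub ((isNilpotent_mulLeft_iff ℚ a).mpr ha)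
    ((isNilpotent_mulRight_iff ℚ a).mpr ha)

theorem exp_mul_eq_exp_commutator_apply_mul (ha : IsNilpotent a) (m : A) :
    exp a * m = exp (mulLeft ℚ a - mulRight ℚ a) m * exp a := by
  have hR : IsNilpotent (mulRight ℚ a) := (isNilpotent_mulRight_iff ℚ a).mpr ha
  have hcomm : Commute (mulRight ℚ a) (mulLeft ℚ a - mulRight ℚ a) :=
    (commute_mulLeft_right a a).symm.sub_right (Commute.refl _)
  have hL : exp (mulLeft ℚ a) = mulLeft ℚ (exp a) := (ha.map_exp (Algebra.lmul ℚ A)).symm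
  have hsplit := exp_add_of_commute hcomm hR (isNilpotent_mulLeft_sub_mulRight ha)
  rw [add_sub_cancel, hL, exp_mulRight ha] at hsplit
  exact congr($hsplit m)

theorem exp_mul_eq_of_commutator {m d₁ d₂ : A} (ha : IsNilpotent a)
    (h₁ : a * m - m * a = d₁) (h₂ : a * d₁ - d₁ * a = 2 • d₂) (h₃ : Commute a d₂) :
    exp a * m = (m + d₁ + d₂) * exp a := by
  set ad := mulLeft ℚ a - mulRight ℚ a
  have had₁ : ad m = d₁ := h₁
  have had₂ : ad d₁ = 2 • d₂ := h₂
  have had₃ : ad d₂ = 0 := sub_eq_zero.mpr h₃.eq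
  have hcube : (ad ^ 3) • m = 0 := by
    rw [Module.End.smul_def, Module.End.pow_apply]
    simp only [Function.iterate_succ_apply', Function.iterate_zero_apply, had₁, had₂, map_nsmul,
      had₃, nsmul_zero]
  have hhalf : (2⁻¹ : ℚ) • (ad ^ 2) m = d₂ := by
    rw [sq, Module.End.mul_apply, had₁, had₂, ← Nat.cast_smul_eq_nsmul ℚ, smul_smul]
    norm_num
  rw [exp_mul_eq_exp_commutator_apply_mul ha, ← Module.End.smul_def,
    exp_smul_eq_sum hcube (isNilpotent_mulLeft_sub_mulRight ha)]
  simp [Finset.sum_range_succ, had₁, hhalf]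

end IsNilpotent

theorem isNilpotent_of_mul_sub_mul_eq_smul {K A : Type*} [Field K] [CharZero K] [Ring A]
    [Algebra K A] [FiniteDimensional K A] {h a : A} {μ : K} (hμ : μ ≠ 0)
    (hha : h * a - a * h = μ • a) : IsNilpotent a := by
  have hpow (k : ℕ) : h * a ^ k - a ^ k * h = ((k : K) * μ) • a ^ k := by
    induction k with
    | zero => simp
    | succ k ih =>
      calc h * a ^ (k + 1) - a ^ (k + 1) * h
          = (h * a ^ k - a ^ k * h) * a + a ^ k * (h * a - a * h) := by noncomm_ring
        _ = (((k + 1 : ℕ) : K) * μ) • a ^ (k + 1) := by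
          rw [ih, hha, smul_mul_assoc, mul_smul_comm, ← pow_succ, ← add_smul]
          push_cast
          ring_nf
  by_contra hnil
  have heigen (k : ℕ) :
      Module.End.HasEigenvector (mulLeft K h - mulRight K h) ((k : K) * μ) (a ^ k) :=
    ⟨Module.End.mem_eigenspace_iff.mpr (hpow k), fun hk => hnil ⟨k, hk⟩⟩
  refine Module.Finite.not_linearIndependent_of_infinite _
    (Module.End.eigenvectors_linearIndependent' _ _ (fun j k hjk => ?_) _ heigen)
  exact_mod_cast mul_right_cancel₀ hμ hjk

theorem Matrix.det_eq_of_semiconjBy {R n : Type*} [CommRing R] [Fintype n] [DecidableEq n]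
    {P X Y : Matrix n n R} (hP : IsUnit P) (h : SemiconjBy P X Y) : X.det = Y.det := by
  have hdet := congrArg Matrix.det h
  rw [Matrix.det_mul, Matrix.det_mul, mul_comm Y.det] at hdet
  exact ((Matrix.isUnit_iff_isUnit_det P).mp hP).mul_left_cancel hdet

section Pencil

variable {n : Type*} [Fintype n] [DecidableEq n]

/-- The paper's `f_φ`, with `H, E, F` the images of `h, e₁, e₂`. -/
def pencilDet {R : Type*} [CommRing R] (H E F : Matrix n n R) (z₀ x y z : R) : R :=
  (z₀ • 1 + x • H + y • E + z • F).det

theorem pencilDet_neg_swap {R : Type*} [CommRing R] (H E F : Matrix n n R) (z₀ x y z : R) :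
    pencilDet (-H) F E z₀ (-x) z y = pencilDet H E F z₀ x y z := by
  unfold pencilDet
  congr 1
  module

variable {K : Type*} [Field K] [CharZero K] {H E F : Matrix n n K}

theorem pencilDet_conj_exp_E (hEF : E * F - F * E = H) (hHE : H * E - E * H = (2 : K) • E)
    (z₀ x y z s : K) :
    pencilDet H E F z₀ x y z = pencilDet H E F z₀ (x + s * z) (y - 2 * s * x - s ^ 2 * z) z := by
  have hE : IsNilpotent (s • E) :=
    (isNilpotent_of_mul_sub_mul_eq_smul two_ne_zero hHE).smul s
  set m := z₀ • (1 : Matrix n n K) + x • H + y • E + z • F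
  have h₁ : s • E * m - m * (s • E) = (s * z) • H - (2 * s * x) • E := by
    simp only [m, mul_add, add_mul, smul_mul_assoc, mul_smul_comm, mul_one, one_mul]
    linear_combination (norm := module) (s * z) • hEF - (s * x) • hHE
  have h₂ : s • E * ((s * z) • H - (2 * s * x) • E) - ((s * z) • H - (2 * s * x) • E) * (s • E)
      = 2 • (-(s ^ 2 * z) • E) := by
    simp only [mul_sub, sub_mul, smul_mul_assoc, mul_smul_comm]
    linear_combination (norm := module) (-(s ^ 2 * z)) • hHE
  have h₃ : Commute (s • E) (-(s ^ 2 * z) • E) := ((Commute.refl E).smul_left _).smul_right _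
  refine Matrix.det_eq_of_semiconjBy hE.isUnit_exp ?_
  rw [SemiconjBy, hE.exp_mul_eq_of_commutator h₁ h₂ h₃]
  congr 1
  module

theorem pencilDet_conj_exp_F (hEF : E * F - F * E = H) (hHF : H * F - F * H = (-2 : K) • F)
    (z₀ x y z s : K) :
    pencilDet H E F z₀ x y z = pencilDet H E F z₀ (x - s * y) y (z + 2 * s * x - s ^ 2 * y) := by
  have hFE : F * E - E * F = -H := by rw [← hEF, neg_sub]
  have hHF' : -H * F - F * -H = (2 : K) • F := by
    simp only [neg_mul, mul_neg]
    linear_combination (norm := module) (-1 : K) • hHF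
  rw [← pencilDet_neg_swap, ← pencilDet_neg_swap H, pencilDet_conj_exp_E hFE hHF' _ _ _ _ s]
  congr 1 <;> ring

end Pencil

theorem char_poly_symmetry (N : ℕ) (H E F : Matrix (Fin N) (Fin N) ℂ)
    (hEF : E * F - F * E = H)
    (hHE : H * E - E * H = (2 : ℂ) • E)
    (hHF : H * F - F * H = (-2 : ℂ) • F)
    (z₀ z₁ : ℂ) :
    (z₀ • (1 : Matrix (Fin N) (Fin N) ℂ) + z₁ • H + E + F).det
      = (z₀ • (1 : Matrix (Fin N) (Fin N) ℂ) + H + z₁ • E + z₁ • F).det := by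
  obtain ⟨μ, hμ⟩ := IsAlgClosed.exists_pow_nat_eq (-2 : ℂ) two_pos
  have hlhs : (z₀ • (1 : Matrix (Fin N) (Fin N) ℂ) + z₁ • H + E + F).det
      = pencilDet H E F z₀ z₁ 1 1 := by simp [pencilDet]
  have hrhs : (z₀ • (1 : Matrix (Fin N) (Fin N) ℂ) + H + z₁ • E + z₁ • F).det
      = pencilDet H E F z₀ 1 z₁ z₁ := by simp [pencilDet]
  -- The three conjugators compose to `(μ / 2) • !![1, 1; 1, -1]` in the defining representation,
  -- which has determinant 1 because `μ² = -2` and swaps `h` with `e + f`.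
  rw [hlhs, hrhs, pencilDet_conj_exp_E hEF hHE _ _ _ _ (μ - 1),
    pencilDet_conj_exp_F hEF hHF _ _ _ _ (μ / 2), pencilDet_conj_exp_E hEF hHE _ _ _ _ (μ + 1)]
  congr 1 <;> grind
end

section
/- The resolution product f_φ * f_ψ equals the characteristic polynomial of the tensor product: f_φ * f_ψ = f_{φ⊗ψ}, where if f_φ = ∏_i (z₀ + α_i·s) and f_ψ = ∏_j (z₀ + β_j·s) with s = √(z₁² + z₂z₃), then f_φ * f_ψ := ∏_{i,j} (z₀ + (α_i + β_j)·s). -/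
/-! Put `x = z₁h + z₂e + z₃f`. The hypotheses say that the characteristic polynomials of `φ(x)`
and `ψ(x)` have the roots `αᵢs` and `βⱼs`, while `(φ⊗ψ)(x) = φ(x)⊗1 + 1⊗ψ(x)` is their Kronecker
sum, whose eigenvalues, with multiplicity, are the sums of those of the two factors. This is
proved by induction on the size of the first factor `A`: conjugating `A` so that one of its
columns is `μ` times a standard basis vector makes the Kronecker sum block triangular, with
diagonal blocks `μ + B` and a smaller Kronecker sum. -/

open Matrix Kronecker

open Polynomial

namespace Matrix

variable {ι κ : Type*} [DecidableEq ι] [DecidableEq κ]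

section CommRing
variable {R : Type*} [CommRing R]

def kroneckerSum (A : Matrix ι ι R) (B : Matrix κ κ R) : Matrix (ι × κ) (ι × κ) R :=
  A ⊗ₖ 1 + 1 ⊗ₖ B

theorem kroneckerSum_add (A A' : Matrix ι ι R) (B B' : Matrix κ κ R) :
    kroneckerSum (A + A') (B + B') = kroneckerSum A B + kroneckerSum A' B' := by
  simp only [kroneckerSum, add_kronecker, kronecker_add]
  abel

theorem smul_kroneckerSum (c : R) (A : Matrix ι ι R) (B : Matrix κ κ R) :
    c • kroneckerSum A B = kroneckerSum (c • A) (c • B) := by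
  simp only [kroneckerSum, smul_add, smul_kronecker, kronecker_smul]

theorem neg_kroneckerSum (A : Matrix ι ι R) (B : Matrix κ κ R) :
    -kroneckerSum A B = kroneckerSum (-A) (-B) := by
  simpa using smul_kroneckerSum (-1) A B

variable [Fintype ι] [Fintype κ]

theorem charpoly_conj {P : Matrix ι ι R} (hP : IsUnit P.det) (A : Matrix ι ι R) :
    (P⁻¹ * A * P).charpoly = A.charpoly := by
  rw [charpoly_mul_comm, ← Matrix.mul_assoc, mul_nonsing_inv P hP, Matrix.one_mul]

theorem charpoly_kroneckerSum_conj {P : Matrix ι ι R} (hP : IsUnit P.det) (A : Matrix ι ι R)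
    (B : Matrix κ κ R) :
    (kroneckerSum (P⁻¹ * A * P) B).charpoly = (kroneckerSum A B).charpoly := by
  have hconj : kroneckerSum (P⁻¹ * A * P) B
      = (P⁻¹ ⊗ₖ (1 : Matrix κ κ R)) * (kroneckerSum A B * (P ⊗ₖ 1)) := by
    simp only [kroneckerSum, Matrix.mul_add, Matrix.add_mul, ← mul_kronecker_mul,
      Matrix.mul_one, Matrix.one_mul, nonsing_inv_mul P hP, Matrix.mul_assoc]
  rw [hconj, charpoly_mul_comm, Matrix.mul_assoc, ← mul_kronecker_mul, mul_nonsing_inv P hP,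
    Matrix.mul_one, one_kronecker_one, Matrix.mul_one]

theorem eval_charpoly_neg (M : Matrix ι ι R) (u : R) :
    (-M).charpoly.eval u = (u • (1 : Matrix ι ι R) + M).det := by
  rw [eval_charpoly, sub_neg_eq_add, smul_one_eq_diagonal]
  rfl

theorem det_eq_mul_of_apply_succAbove_eq_zero {k : ℕ} (p : Fin (k + 1))
    (M : Matrix (Fin (k + 1) × κ) (Fin (k + 1) × κ) R)
    (h : ∀ i j j', M (p.succAbove i, j) (p, j') = 0) :
    M.det = (M.submatrix (p, ·) (p, ·)).det
      * (M.submatrix (Prod.map p.succAbove id) (Prod.map p.succAbove id)).det := by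
  let e : Fin (k + 1) × κ ≃ κ ⊕ Fin k × κ :=
    ((finSuccEquiv' p).prodCongr (Equiv.refl κ)).trans optionProdEquiv
  have hblocks : reindex e e M = fromBlocks (M.submatrix (p, ·) (p, ·))
      (M.submatrix (p, ·) (Prod.map p.succAbove id)) 0
      (M.submatrix (Prod.map p.succAbove id) (Prod.map p.succAbove id)) := by
    ext (j | ⟨i, j⟩) (j' | ⟨i', j'⟩) <;> simp [e, h]
  rw [← det_reindex_self e M, hblocks, det_fromBlocks_zero₂₁]

theorem charmatrix_submatrix {m : Type*} [Fintype m] [DecidableEq m] (M : Matrix ι ι R)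
    {f : m → ι} (hf : Function.Injective f) : (M.submatrix f f).charmatrix = M.charmatrix.submatrix f f := by
  ext i j
  by_cases hij : i = j
  · simp [hij]
  · simp [charmatrix_apply_ne _ _ _ hij, charmatrix_apply_ne _ _ _ (hf.ne hij)]

theorem charpoly_eq_mul_of_apply_succAbove_eq_zero {k : ℕ} (p : Fin (k + 1))
    (A : Matrix (Fin (k + 1)) (Fin (k + 1)) R) (hcol : ∀ i, A (p.succAbove i) p = 0) :
    A.charpoly = (X - C (A p p)) * (A.submatrix p.succAbove p.succAbove).charpoly := by
  rw [charpoly, det_succ_column _ p, Finset.sum_eq_single p, charpoly,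
    charmatrix_submatrix _ p.succAbove_right_injective, charmatrix_apply_eq,
    Even.neg_one_pow ⟨_, rfl⟩, one_mul]
  · intro i _ hi
    obtain ⟨i, rfl⟩ := Fin.exists_succAbove_eq hi
    simp [hcol]
  · simp

theorem charpoly_kroneckerSum_eq_mul_of_apply_succAbove_eq_zero {k : ℕ} (p : Fin (k + 1))
    (A : Matrix (Fin (k + 1)) (Fin (k + 1)) R) (hcol : ∀ i, A (p.succAbove i) p = 0)
    (B : Matrix κ κ R) :
    (kroneckerSum A B).charpoly = B.charpoly.comp (X - C (A p p))
      * (kroneckerSum (A.submatrix p.succAbove p.succAbove) B).charpoly := by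
  have hblock : ∀ i j j', (kroneckerSum A B).charmatrix (p.succAbove i, j) (p, j') = 0 := by
    intro i j j'
    rw [charmatrix_apply_ne _ _ _ (by simp [Fin.succAbove_ne])]
    simp [kroneckerSum, hcol, Fin.succAbove_ne]
  have hcorner : (kroneckerSum A B).submatrix (p, ·) (p, ·) = B - scalar κ (-A p p) := by
    ext j j'
    by_cases hj : j = j' <;> simp [kroneckerSum, hj, add_comm]
  have hrest : (kroneckerSum A B).submatrix (Prod.map p.succAbove id) (Prod.map p.succAbove id)
      = kroneckerSum (A.submatrix p.succAbove p.succAbove) B := by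
    ext ⟨i, j⟩ ⟨i', j'⟩
    simp [kroneckerSum, one_apply, p.succAbove_right_injective.eq_iff]
  rw [charpoly, det_eq_mul_of_apply_succAbove_eq_zero p _ hblock,
    ← charmatrix_submatrix _ (Prod.mk_right_injective p),
    ← charmatrix_submatrix _ (p.succAbove_right_injective.prodMap Function.injective_id),
    hcorner, hrest, ← charpoly, ← charpoly, charpoly_sub_scalar, map_neg, ← sub_eq_add_neg]

end CommRing

section Field
variable {K : Type*} [Field K] [Fintype ι] [Fintype κ]

theorem exists_conj_apply_succAbove_eq_zero {k : ℕ} (A : Matrix (Fin (k + 1)) (Fin (k + 1)) K)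
    {μ : K} (hμ : A.charpoly.IsRoot μ) :
    ∃ (P : Matrix (Fin (k + 1)) (Fin (k + 1)) K) (p : Fin (k + 1)), IsUnit P.det ∧
      (P⁻¹ * A * P) p p = μ ∧ ∀ i, (P⁻¹ * A * P) (p.succAbove i) p = 0 := by
  have hdet : (scalar (Fin (k + 1)) μ - A).det = 0 := by rwa [← eval_charpoly]
  obtain ⟨v, hv, hμv⟩ := exists_mulVec_eq_zero_iff.mpr hdet
  have hAv : A *ᵥ v = μ • v := by
    rw [sub_mulVec, scalar_apply, ← smul_one_eq_diagonal, smul_mulVec, one_mulVec,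
      sub_eq_zero] at hμv
    exact hμv.symm
  obtain ⟨p, hp⟩ := Function.ne_iff.mp hv
  set P := (1 : Matrix (Fin (k + 1)) (Fin (k + 1)) K).updateCol p v
  have hP : IsUnit P.det := by
    rw [← cramer_apply, cramer_one]
    exact hp.isUnit
  have hPe : P *ᵥ Pi.single p 1 = v := by
    ext i
    simp [P]
  have heigen : (P⁻¹ * A * P) *ᵥ Pi.single p 1 = μ • Pi.single p 1 := by
    rw [← mulVec_mulVec, hPe, ← mulVec_mulVec, hAv, mulVec_smul, ← hPe, mulVec_mulVec,
      nonsing_inv_mul P hP, one_mulVec]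
  refine ⟨P, p, hP, ?_, fun i => ?_⟩
  · simpa [mulVec_single_one] using congrFun heigen p
  · simpa [mulVec_single_one, Fin.succAbove_ne] using congrFun heigen (p.succAbove i)

theorem charpoly_kroneckerSum_eq_prod {n : ℕ} {A : Matrix (Fin n) (Fin n) K} {a : Fin n → K}
    (hA : A.charpoly = ∏ i, (X - C (a i))) (B : Matrix κ κ K) :
    (kroneckerSum A B).charpoly = ∏ i, B.charpoly.comp (X - C (a i)) := by
  induction n with
  | zero => simp
  | succ k ih =>
    have hroot : A.charpoly.IsRoot (a 0) := by simp [hA, Fin.prod_univ_succ]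
    obtain ⟨P, p, hP, hpp, hcol⟩ := exists_conj_apply_succAbove_eq_zero A hroot
    have hA' : ((P⁻¹ * A * P).submatrix p.succAbove p.succAbove).charpoly
        = ∏ i : Fin k, (X - C (a i.succ)) := by
      have h := charpoly_eq_mul_of_apply_succAbove_eq_zero p _ hcol
      rw [charpoly_conj hP, hA, Fin.prod_univ_succ, hpp] at h
      exact (mul_left_cancel₀ (X_sub_C_ne_zero _) h).symm
    rw [← charpoly_kroneckerSum_conj hP,
      charpoly_kroneckerSum_eq_mul_of_apply_succAbove_eq_zero p _ hcol, hpp, ih hA', Fin.prod_univ_succ]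

theorem charpoly_neg_eq_prod [Infinite K] {M : Matrix ι ι K} {c : ι → K}
    (h : ∀ u, (u • (1 : Matrix ι ι K) + M).det = ∏ i, (u + c i)) :
    (-M).charpoly = ∏ i, (X - C (-c i)) :=
  Polynomial.funext fun u => by simp [eval_charpoly_neg, h, eval_prod]

end Field

end Matrix

theorem resolution_product_eq_tensor_char_poly_general (n m : ℕ)
    (H E F : Matrix (Fin n) (Fin n) ℂ) (H' E' F' : Matrix (Fin m) (Fin m) ℂ)
    (α : Fin n → ℂ) (β : Fin m → ℂ)
    (hφ : ∀ z₀ z₁ z₂ z₃ s : ℂ, s ^ 2 = z₁ ^ 2 + z₂ * z₃ →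
      (z₀ • (1 : Matrix (Fin n) (Fin n) ℂ) + z₁ • H + z₂ • E + z₃ • F).det
        = ∏ i, (z₀ + α i * s))
    (hψ : ∀ z₀ z₁ z₂ z₃ s : ℂ, s ^ 2 = z₁ ^ 2 + z₂ * z₃ →
      (z₀ • (1 : Matrix (Fin m) (Fin m) ℂ) + z₁ • H' + z₂ • E' + z₃ • F').det
        = ∏ j, (z₀ + β j * s))
    (z₀ z₁ z₂ z₃ s : ℂ) (hs : s ^ 2 = z₁ ^ 2 + z₂ * z₃) :
    (z₀ • (1 : Matrix (Fin n × Fin m) (Fin n × Fin m) ℂ)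
        + z₁ • (H ⊗ₖ (1 : Matrix (Fin m) (Fin m) ℂ) + (1 : Matrix (Fin n) (Fin n) ℂ) ⊗ₖ H')
        + z₂ • (E ⊗ₖ (1 : Matrix (Fin m) (Fin m) ℂ) + (1 : Matrix (Fin n) (Fin n) ℂ) ⊗ₖ E')
        + z₃ • (F ⊗ₖ (1 : Matrix (Fin m) (Fin m) ℂ) + (1 : Matrix (Fin n) (Fin n) ℂ) ⊗ₖ F')).det
      = ∏ i, ∏ j, (z₀ + (α i + β j) * s) := by
  set M := z₁ • H + z₂ • E + z₃ • F
  set M' := z₁ • H' + z₂ • E' + z₃ • F'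
  have hM : (-M).charpoly = ∏ i, (X - C (-(α i * s))) :=
    charpoly_neg_eq_prod fun u => by rw [← hφ u z₁ z₂ z₃ s hs]; simp only [M, add_assoc]
  have hM' : ∀ u, (-M').charpoly.eval u = ∏ j, (u + β j * s) := fun u => by
    rw [eval_charpoly_neg, ← hψ u z₁ z₂ z₃ s hs]; simp only [M', add_assoc]
  have hsum : z₁ • kroneckerSum H H' + z₂ • kroneckerSum E E' + z₃ • kroneckerSum F F'
      = -kroneckerSum (-M) (-M') := by
    simp only [neg_kroneckerSum, neg_neg, M, M', kroneckerSum_add, smul_kroneckerSum]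
  calc _ = (kroneckerSum (-M) (-M')).charpoly.eval z₀ := by
        rw [← neg_neg (kroneckerSum (-M) (-M')), eval_charpoly_neg, ← hsum, ← add_assoc,
          ← add_assoc]
        rfl
    _ = ∏ i, (-M').charpoly.eval (z₀ + α i * s) := by
        simp [charpoly_kroneckerSum_eq_prod hM, eval_prod]
    _ = ∏ i, ∏ j, (z₀ + (α i + β j) * s) := by
        simp only [hM', add_mul, add_assoc]

theorem resolution_product_eq_tensor_char_poly (n m : ℕ)
    (H E F : Matrix (Fin n) (Fin n) ℂ) (H' E' F' : Matrix (Fin m) (Fin m) ℂ)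
    (hEF : E * F - F * E = H)
    (hHE : H * E - E * H = (2 : ℂ) • E)
    (hHF : H * F - F * H = (-2 : ℂ) • F)
    (hEF' : E' * F' - F' * E' = H')
    (hHE' : H' * E' - E' * H' = (2 : ℂ) • E')
    (hHF' : H' * F' - F' * H' = (-2 : ℂ) • F')
    (α : Fin n → ℂ) (β : Fin m → ℂ)
    (hφ : ∀ z₀ z₁ z₂ z₃ s : ℂ, s ^ 2 = z₁ ^ 2 + z₂ * z₃ →
      (z₀ • (1 : Matrix (Fin n) (Fin n) ℂ) + z₁ • H + z₂ • E + z₃ • F).det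
        = ∏ i, (z₀ + α i * s))
    (hψ : ∀ z₀ z₁ z₂ z₃ s : ℂ, s ^ 2 = z₁ ^ 2 + z₂ * z₃ →
      (z₀ • (1 : Matrix (Fin m) (Fin m) ℂ) + z₁ • H' + z₂ • E' + z₃ • F').det
        = ∏ j, (z₀ + β j * s))
    (z₀ z₁ z₂ z₃ s : ℂ) (hs : s ^ 2 = z₁ ^ 2 + z₂ * z₃) :
    (z₀ • (1 : Matrix (Fin n × Fin m) (Fin n × Fin m) ℂ)
        + z₁ • (H ⊗ₖ (1 : Matrix (Fin m) (Fin m) ℂ) + (1 : Matrix (Fin n) (Fin n) ℂ) ⊗ₖ H')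
        + z₂ • (E ⊗ₖ (1 : Matrix (Fin m) (Fin m) ℂ) + (1 : Matrix (Fin n) (Fin n) ℂ) ⊗ₖ E')
        + z₃ • (F ⊗ₖ (1 : Matrix (Fin m) (Fin m) ℂ) + (1 : Matrix (Fin n) (Fin n) ℂ) ⊗ₖ F')).det
      = ∏ i, ∏ j, (z₀ + (α i + β j) * s) :=
  resolution_product_eq_tensor_char_poly_general n m H E F H' E' F' α β hφ hψ z₀ z₁ z₂ z₃ s hs
end

section
/- For 0 ≤ n ≤ m, the resolution product of the characteristic polynomials of the irreducible representations φ_m and φ_n of sl(2,ℂ) satisfies f_{φ_m} * f_{φ_n} = ∏_{k=0}^{n} f_{φ_{m-n+2k}}, reflecting the Clebsch–Gordan decomposition φ_m ⊗ φ_n ≅ ⊕_{k=0}^{n} φ_{m-n+2k}. -/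
theorem clebsch_gordan_resolution_product (m n : ℕ) (hnm : n ≤ m) (z₀ s : ℂ) :
    (∏ i ∈ Finset.range (m + 1), ∏ j ∈ Finset.range (n + 1),
        (z₀ + (((m : ℂ) - 2 * i) + ((n : ℂ) - 2 * j)) * s))
      = ∏ k ∈ Finset.range (n + 1), ∏ i ∈ Finset.range (m - n + 2 * k + 1),
        (z₀ + (((m : ℂ) - (n : ℂ) + 2 * k) - 2 * i) * s) := by
  rw [← Finset.prod_product', Finset.prod_sigma']
  refine Finset.prod_nbij'
    (fun p => ⟨n - min p.2 (m - p.1), p.1 + p.2 - min p.2 (m - p.1)⟩)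
    (fun q => if q.2 + n ≤ m + q.1 then (q.2, n - q.1)
      else (m - n + q.1, q.2 + 2 * n - (m + 2 * q.1)))
    ?_ ?_ ?_ ?_ ?_
  · rintro ⟨i, j⟩ hp
    simp only [Finset.mem_product, Finset.mem_range] at hp
    simp only [Finset.mem_sigma, Finset.mem_range]
    omega
  · rintro ⟨k, i'⟩ hq
    simp only [Finset.mem_sigma, Finset.mem_range] at hq
    simp only [Finset.mem_product, Finset.mem_range]
    split_ifs <;> omega
  · rintro ⟨i, j⟩ hp
    simp only [Finset.mem_product, Finset.mem_range] at hp
    dsimp only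
    rcases le_total j (m - i) with h | h
    · rw [min_eq_left h]
      split_ifs with hc <;> rw [Prod.ext_iff] <;> constructor <;> simp <;> omega
    · rw [min_eq_right h]
      split_ifs with hc <;> rw [Prod.ext_iff] <;> constructor <;> simp <;> omega
  · rintro ⟨k, i'⟩ hq
    simp only [Finset.mem_sigma, Finset.mem_range] at hq
    dsimp only
    split_ifs with hc <;> rw [Sigma.mk.inj_iff, heq_eq_eq] <;> constructor <;> omega
  · rintro ⟨i, j⟩ hp
    simp only [Finset.mem_product, Finset.mem_range] at hp
    have h1 : min j (m - i) ≤ n := by omega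
    have h2 : min j (m - i) ≤ i + j := by omega
    push_cast [Nat.cast_sub h1, Nat.cast_sub h2]
    ring_nf
end
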